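/- arXiv:2411.04512 — 2 statements merged into one kernel-verified Lean document; each statement's English description precedes it below -/
import Mathlib

section
/- Subset GNSA convergence: if X and Y are point clouds of size N with a one-to-one correspondence, and a random subset of indices S of [N] is chosen by including each index independently with probability s/N, while the normalization constants D_X and D_Y are fixed to those of the full clouds, then the expectation over S of (1/s^2) * sum_{i,j in S} |d(x_i,x_j)/D_X - d(y_i,y_j)/D_Y| equals GNSA(X,Y). -/
/-!
Under the product Bernoulli measure the selection indicators of distinct indices are independent,
so `𝔼[1[i ∈ S] 1[j ∈ S]] = p²` for `i ≠ j`, while the diagonal terms vanish because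
`d(x_i, x_i) = 0`. The expectation is therefore `p² / s²` times the full double sum, and
`p = s / N` turns this factor into `1 / N²`.
-/

open Finset

/-- Global Normalized Space Alignment between two indexed point clouds of the same
size, possibly lying in different-dimensional Euclidean spaces. -/
noncomputable def GNSA {N n m : ℕ} (X : Fin N → EuclideanSpace ℝ (Fin n))
    (Y : Fin N → EuclideanSpace ℝ (Fin m)) : ℝ :=
  (1 / (N : ℝ) ^ 2) * ∑ i : Fin N, ∑ j : Fin N,
    |dist (X i) (X j) / (⨆ k, ‖X k‖) - dist (Y i) (Y j) / (⨆ k, ‖Y k‖)|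

open MeasureTheory ProbabilityTheory
open scoped NNReal ENNReal

theorem integral_pi_mul_eval_of_ne {ι : Type*} [Fintype ι] {Ω : ι → Type*}
    [∀ i, MeasurableSpace (Ω i)] (μ : (i : ι) → Measure (Ω i)) [∀ i, IsProbabilityMeasure (μ i)]
    {i j : ι} (hij : i ≠ j) {f : Ω i → ℝ} {g : Ω j → ℝ}
    (hf : AEStronglyMeasurable f (μ i)) (hg : AEStronglyMeasurable g (μ j)) :
    ∫ ω, f (ω i) * g (ω j) ∂Measure.pi μ = (∫ x, f x ∂μ i) * ∫ x, g x ∂μ j := by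
  have hindep : (fun ω : (k : ι) → Ω k ↦ ω i) ⟂ᵢ[Measure.pi μ] (fun ω ↦ ω j) :=
    (iIndepFun_pi (X := fun _ ↦ id) fun _ ↦ aemeasurable_id).indepFun hij
  have hfg : (f ∘ fun ω ↦ ω i) ⟂ᵢ[Measure.pi μ] (g ∘ fun ω ↦ ω j) :=
    hindep.comp₀ (measurable_pi_apply i).aemeasurable (measurable_pi_apply j).aemeasurable
      (by rw [(measurePreserving_eval μ i).map_eq]; exact hf.aemeasurable)
      (by rw [(measurePreserving_eval μ j).map_eq]; exact hg.aemeasurable)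
  exact (hfg.integral_fun_mul_eq_mul_integral
    (hf.comp_measurePreserving (measurePreserving_eval μ i))
    (hg.comp_measurePreserving (measurePreserving_eval μ j))).trans
    (congrArg₂ _ (integral_comp_eval hf) (integral_comp_eval hg))

theorem PMF.integral_bernoulli_ite_one_zero (q : ℝ≥0) (hq : q ≤ 1) :
    ∫ b, (if b then (1 : ℝ) else 0) ∂(PMF.bernoulli q hq).toMeasure = q := by
  simp [integral_fintype .of_finite, Measure.real, PMF.bernoulli_apply]

theorem integral_bernoulli_pi_ite_mul_ite {ι : Type*} [Fintype ι] (q : ℝ≥0) (hq : q ≤ 1)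
    {i j : ι} (hij : i ≠ j) :
    ∫ ω : ι → Bool, (if ω i then (1 : ℝ) else 0) * (if ω j then 1 else 0)
      ∂Measure.pi (fun _ ↦ (PMF.bernoulli q hq).toMeasure) = (q : ℝ) ^ 2 := by
  rw [integral_pi_mul_eval_of_ne (fun _ ↦ (PMF.bernoulli q hq).toMeasure) hij
    (f := fun b ↦ if b then (1 : ℝ) else 0) (g := fun b ↦ if b then (1 : ℝ) else 0)
    .of_discrete .of_discrete,
    PMF.integral_bernoulli_ite_one_zero, sq]

theorem integral_bernoulli_pi_sum_sum_ite_mul_ite {ι : Type*} [Fintype ι] (q : ℝ≥0) (hq : q ≤ 1)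
    (c : ι → ι → ℝ) (hc : ∀ i, c i i = 0) :
    ∫ ω : ι → Bool, ∑ i, ∑ j, c i j * (if ω i then (1 : ℝ) else 0) * (if ω j then 1 else 0)
      ∂Measure.pi (fun _ ↦ (PMF.bernoulli q hq).toMeasure) = (q : ℝ) ^ 2 * ∑ i, ∑ j, c i j := by
  rw [integral_finsetSum _ fun i _ ↦ .of_finite, mul_sum]
  refine sum_congr rfl fun i _ ↦ ?_
  rw [integral_finsetSum _ fun j _ ↦ .of_finite, mul_sum]
  refine sum_congr rfl fun j _ ↦ ?_
  obtain rfl | hij := eq_or_ne i j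
  · simp [hc]
  · simp_rw [mul_assoc, integral_const_mul, integral_bernoulli_pi_ite_mul_ite q hq hij, mul_comm]

open MeasureTheory ENNReal in
/-- Subset GNSA convergence: choosing each index independently with probability
s/N (and keeping the full-cloud normalization constants), the expectation of the
minibatch GNSA estimator equals the full GNSA. -/
theorem gnsa_subset_expectation {N n m : ℕ} (X : Fin N → EuclideanSpace ℝ (Fin n))
    (Y : Fin N → EuclideanSpace ℝ (Fin m))
    (s : ℕ) (hs : 0 < s)
    (p : ℝ≥0∞) (hp : p ≤ 1) (hps : p = (s : ℝ≥0∞) / (N : ℝ≥0∞)) :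
    ∫ ω : Fin N → Bool,
        ((1 / (s : ℝ) ^ 2) * ∑ i : Fin N, ∑ j : Fin N,
          |dist (X i) (X j) / (⨆ k, ‖X k‖) - dist (Y i) (Y j) / (⨆ k, ‖Y k‖)| *
            (if ω i then (1 : ℝ) else 0) * (if ω j then (1 : ℝ) else 0))
        ∂(Measure.pi fun _ : Fin N => (PMF.bernoulli p.toNNReal
          (by simpa using ENNReal.toNNReal_mono ENNReal.one_ne_top hp)).toMeasure)
      = GNSA X Y := by
  have hp_real : (p.toNNReal : ℝ) = s / N := by
    rw [coe_toNNReal_eq_toReal, hps, toReal_div, toReal_natCast, toReal_natCast]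
  rw [integral_const_mul]
  refine (congrArg _ (integral_bernoulli_pi_sum_sum_ite_mul_ite _ _ _ fun i ↦ by simp)).trans ?_
  rw [hp_real, GNSA, ← mul_assoc]
  congr 1
  field_simp
end

section
/- LNSA^metric is not invariant under invertible linear transformations: with X = {(1,0,0),(0,1,0),(0,0,1)}, Y = {(1,1,0),(1,0,1),(0,1,1)}, and A the invertible linear map sending (a,b,c) to (2a,b,c), one has LNSA^metric(X,Y) = 0 but LNSA^metric(AX,Y) = (1/12) * (log 5 - log 2)^2 (using k = 2 nearest neighbors). -/
open Finset

/-- Approximate dimensionality of the point x_i of the cloud X with respect to a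
tuple of k+1 neighbour indices (the maximum-likelihood LID estimator evaluated on
an arbitrary index tuple, the last index playing the role of the k-th neighbour). -/
noncomputable def AD {N n : ℕ} (k : ℕ) (X : Fin N → EuclideanSpace ℝ (Fin n))
    (i : Fin N) (t : Fin (k + 1) → Fin N) : ℝ :=
  -(((1 : ℝ) / (k + 1)) *
      ∑ j : Fin (k + 1),
        Real.log (dist (X i) (X (t j)) / dist (X i) (X (t (Fin.last k)))))⁻¹

/-- LNSA of B with respect to A, using the k-nearest-neighbour assignment knnA of
the reference cloud A: the mean squared discrepancy of reciprocal LIDs. -/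
noncomputable def LNSAone {N n m : ℕ} (k : ℕ) (A : Fin N → EuclideanSpace ℝ (Fin n))
    (B : Fin N → EuclideanSpace ℝ (Fin m)) (knnA : Fin N → Fin (k + 1) → Fin N) : ℝ :=
  (1 / (N : ℝ)) * ∑ i : Fin N, ((AD k A i (knnA i))⁻¹ - (AD k B i (knnA i))⁻¹) ^ 2

/-- Symmetrized LNSA: LNSA^metric(X,Y) = LNSA_X(Y) + LNSA_Y(X). -/
noncomputable def LNSAmetric {N n m : ℕ} (k : ℕ)
    (X : Fin N → EuclideanSpace ℝ (Fin n)) (Y : Fin N → EuclideanSpace ℝ (Fin m))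
    (knnX : Fin N → Fin (k + 1) → Fin N) (knnY : Fin N → Fin (k + 1) → Fin N) : ℝ :=
  LNSAone k X Y knnX + LNSAone k Y X knnY

/-- Interpret a plain vector as a point of Euclidean space. -/
noncomputable def toE (v : Fin 3 → ℝ) : EuclideanSpace ℝ (Fin 3) :=
  (WithLp.equiv 2 (Fin 3 → ℝ)).symm v

lemma dist_toE (a b : Fin 3 → ℝ) : dist (toE a) (toE b) =
    Real.sqrt ((a 0 - b 0)^2 + (a 1 - b 1)^2 + (a 2 - b 2)^2) := by
  rw [EuclideanSpace.dist_eq]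
  simp [toE, Fin.sum_univ_three, Real.dist_eq, sq_abs]

/-- The invertible linear map doubling the first coordinate. -/
noncomputable def Amap : EuclideanSpace ℝ (Fin 3) ≃ₗ[ℝ] EuclideanSpace ℝ (Fin 3) where
  toFun v := toE ![2 * v 0, v 1, v 2]
  invFun v := toE ![v 0 / 2, v 1, v 2]
  map_add' v w := by
    ext i; fin_cases i <;> simp [toE] <;> ring
  map_smul' c v := by
    ext i; fin_cases i <;> simp [toE] <;> ring
  left_inv v := by
    ext i; fin_cases i <;> simp [toE] <;> ring
  right_inv v := by
    ext i; fin_cases i <;> simp [toE] <;> ring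

lemma AD_inv_eq (C : Fin 3 → EuclideanSpace ℝ (Fin 3)) (i : Fin 3) (t : Fin 2 → Fin 3)
    (hb : dist (C i) (C (t 1)) ≠ 0) :
    (AD 1 C i t)⁻¹ = -(1/2 * Real.log (dist (C i) (C (t 0)) / dist (C i) (C (t 1)))) := by
  have hlast : (Fin.last 1) = (1 : Fin 2) := rfl
  simp [AD, Fin.sum_univ_two, hlast, div_self hb, inv_neg, inv_inv]
  norm_num

lemma AD_inv_zero (C : Fin 3 → EuclideanSpace ℝ (Fin 3)) (i : Fin 3) (t : Fin 2 → Fin 3)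
    (d : ℝ) (hd : d ≠ 0) (h0 : dist (C i) (C (t 0)) = d)
    (h1 : dist (C i) (C (t 1)) = d) : (AD 1 C i t)⁻¹ = 0 := by
  rw [AD_inv_eq C i t (h1 ▸ hd), h0, h1, div_self hd, Real.log_one]
  ring

/-- LNSA^metric is not invariant under invertible linear transformations: for the
standard-basis cloud X and the two-ones cloud Y with k = 2 nearest neighbours,
LNSA^metric(X,Y) = 0, yet for the invertible linear map A doubling the first
coordinate, LNSA^metric(AX,Y) = (1/12)(log 5 - log 2)². -/
theorem lnsa_metric_not_ILT_invariant :
    LNSAmetric 1 (![toE ![1, 0, 0], toE ![0, 1, 0], toE ![0, 0, 1]])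
        (![toE ![1, 1, 0], toE ![1, 0, 1], toE ![0, 1, 1]])
        (![![1, 2], ![2, 0], ![1, 0]]) (![![1, 2], ![2, 0], ![1, 0]]) = 0 ∧
    ∃ A : EuclideanSpace ℝ (Fin 3) ≃ₗ[ℝ] EuclideanSpace ℝ (Fin 3),
      (∀ v : EuclideanSpace ℝ (Fin 3), A v = toE ![2 * v 0, v 1, v 2]) ∧
      LNSAmetric 1
          (fun i => A ((![toE ![1, 0, 0], toE ![0, 1, 0], toE ![0, 0, 1]]) i))
          (![toE ![1, 1, 0], toE ![1, 0, 1], toE ![0, 1, 1]])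
          (![![1, 2], ![2, 0], ![1, 0]]) (![![1, 2], ![2, 0], ![1, 0]]) =
        (1 / 12) * (Real.log 5 - Real.log 2) ^ 2 := by
  have s2 : Real.sqrt 2 ≠ 0 := by positivity
  have s5 : Real.sqrt 5 ≠ 0 := by positivity
  have dXa : dist (toE ![1,0,0]) (toE ![0,1,0]) = Real.sqrt 2 := by
    rw [dist_toE]; norm_num [Matrix.cons_val_zero, Matrix.cons_val_one, Matrix.head_cons,
      Matrix.cons_val_two, Matrix.tail_cons]
  have dXb : dist (toE ![1,0,0]) (toE ![0,0,1]) = Real.sqrt 2 := by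
    rw [dist_toE]; norm_num [Matrix.cons_val_zero, Matrix.cons_val_one, Matrix.head_cons,
      Matrix.cons_val_two, Matrix.tail_cons]
  have dXc : dist (toE ![0,1,0]) (toE ![0,0,1]) = Real.sqrt 2 := by
    rw [dist_toE]; norm_num [Matrix.cons_val_zero, Matrix.cons_val_one, Matrix.head_cons,
      Matrix.cons_val_two, Matrix.tail_cons]
  have dXd : dist (toE ![0,1,0]) (toE ![1,0,0]) = Real.sqrt 2 := by
    rw [dist_toE]; norm_num [Matrix.cons_val_zero, Matrix.cons_val_one, Matrix.head_cons,
      Matrix.cons_val_two, Matrix.tail_cons]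
  have dXe : dist (toE ![0,0,1]) (toE ![0,1,0]) = Real.sqrt 2 := by
    rw [dist_toE]; norm_num [Matrix.cons_val_zero, Matrix.cons_val_one, Matrix.head_cons,
      Matrix.cons_val_two, Matrix.tail_cons]
  have dXf : dist (toE ![0,0,1]) (toE ![1,0,0]) = Real.sqrt 2 := by
    rw [dist_toE]; norm_num [Matrix.cons_val_zero, Matrix.cons_val_one, Matrix.head_cons,
      Matrix.cons_val_two, Matrix.tail_cons]
  have dYa : dist (toE ![1,1,0]) (toE ![1,0,1]) = Real.sqrt 2 := by
    rw [dist_toE]; norm_num [Matrix.cons_val_zero, Matrix.cons_val_one, Matrix.head_cons,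
      Matrix.cons_val_two, Matrix.tail_cons]
  have dYb : dist (toE ![1,1,0]) (toE ![0,1,1]) = Real.sqrt 2 := by
    rw [dist_toE]; norm_num [Matrix.cons_val_zero, Matrix.cons_val_one, Matrix.head_cons,
      Matrix.cons_val_two, Matrix.tail_cons]
  have dYc : dist (toE ![1,0,1]) (toE ![0,1,1]) = Real.sqrt 2 := by
    rw [dist_toE]; norm_num [Matrix.cons_val_zero, Matrix.cons_val_one, Matrix.head_cons,
      Matrix.cons_val_two, Matrix.tail_cons]
  have dYd : dist (toE ![1,0,1]) (toE ![1,1,0]) = Real.sqrt 2 := by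
    rw [dist_toE]; norm_num [Matrix.cons_val_zero, Matrix.cons_val_one, Matrix.head_cons,
      Matrix.cons_val_two, Matrix.tail_cons]
  have dYe : dist (toE ![0,1,1]) (toE ![1,0,1]) = Real.sqrt 2 := by
    rw [dist_toE]; norm_num [Matrix.cons_val_zero, Matrix.cons_val_one, Matrix.head_cons,
      Matrix.cons_val_two, Matrix.tail_cons]
  have dYf : dist (toE ![0,1,1]) (toE ![1,1,0]) = Real.sqrt 2 := by
    rw [dist_toE]; norm_num [Matrix.cons_val_zero, Matrix.cons_val_one, Matrix.head_cons,
      Matrix.cons_val_two, Matrix.tail_cons]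
  have dZa : dist (toE ![2,0,0]) (toE ![0,1,0]) = Real.sqrt 5 := by
    rw [dist_toE]; norm_num [Matrix.cons_val_zero, Matrix.cons_val_one, Matrix.head_cons,
      Matrix.cons_val_two, Matrix.tail_cons]
  have dZb : dist (toE ![2,0,0]) (toE ![0,0,1]) = Real.sqrt 5 := by
    rw [dist_toE]; norm_num [Matrix.cons_val_zero, Matrix.cons_val_one, Matrix.head_cons,
      Matrix.cons_val_two, Matrix.tail_cons]
  have dZc : dist (toE ![0,1,0]) (toE ![2,0,0]) = Real.sqrt 5 := by
    rw [dist_toE]; norm_num [Matrix.cons_val_zero, Matrix.cons_val_one, Matrix.head_cons,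
      Matrix.cons_val_two, Matrix.tail_cons]
  have dZd : dist (toE ![0,0,1]) (toE ![2,0,0]) = Real.sqrt 5 := by
    rw [dist_toE]; norm_num [Matrix.cons_val_zero, Matrix.cons_val_one, Matrix.head_cons,
      Matrix.cons_val_two, Matrix.tail_cons]
  set X := ![toE ![1, 0, 0], toE ![0, 1, 0], toE ![0, 0, 1]] with hXdef
  set Y := ![toE ![1, 1, 0], toE ![1, 0, 1], toE ![0, 1, 1]] with hYdef
  set Z := ![toE ![2, 0, 0], toE ![0, 1, 0], toE ![0, 0, 1]] with hZdef
  have kX0 : (AD 1 X 0 ![1, 2])⁻¹ = 0 := AD_inv_zero X 0 ![1, 2] _ s2 dXa dXb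
  have kX1 : (AD 1 X 1 ![2, 0])⁻¹ = 0 := AD_inv_zero X 1 ![2, 0] _ s2 dXc dXd
  have kX2 : (AD 1 X 2 ![1, 0])⁻¹ = 0 := AD_inv_zero X 2 ![1, 0] _ s2 dXe dXf
  have kY0 : (AD 1 Y 0 ![1, 2])⁻¹ = 0 := AD_inv_zero Y 0 ![1, 2] _ s2 dYa dYb
  have kY1 : (AD 1 Y 1 ![2, 0])⁻¹ = 0 := AD_inv_zero Y 1 ![2, 0] _ s2 dYc dYd
  have kY2 : (AD 1 Y 2 ![1, 0])⁻¹ = 0 := AD_inv_zero Y 2 ![1, 0] _ s2 dYe dYf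
  have kZ0 : (AD 1 Z 0 ![1, 2])⁻¹ = 0 := AD_inv_zero Z 0 ![1, 2] _ s5 dZa dZb
  have kZ1 : (AD 1 Z 1 ![2, 0])⁻¹ =
      -(1/2 * Real.log (Real.sqrt 2 / Real.sqrt 5)) := by
    have h := AD_inv_eq Z 1 ![2, 0] (by rw [show (Z 1 : EuclideanSpace ℝ (Fin 3)) = toE ![0,1,0] from rfl]; exact dZc ▸ s5)
    rw [h, (show dist (Z 1) (Z (![2, 0] 0)) = Real.sqrt 2 from dXc),
      (show dist (Z 1) (Z (![2, 0] 1)) = Real.sqrt 5 from dZc)]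
  have kZ2 : (AD 1 Z 2 ![1, 0])⁻¹ =
      -(1/2 * Real.log (Real.sqrt 2 / Real.sqrt 5)) := by
    have h := AD_inv_eq Z 2 ![1, 0] (by rw [show (Z 2 : EuclideanSpace ℝ (Fin 3)) = toE ![0,0,1] from rfl]; exact dZd ▸ s5)
    rw [h, (show dist (Z 2) (Z (![1, 0] 0)) = Real.sqrt 2 from dXe),
      (show dist (Z 2) (Z (![1, 0] 1)) = Real.sqrt 5 from dZd)]
  constructor
  · simp only [LNSAmetric, LNSAone, Fin.sum_univ_three, Matrix.cons_val_zero,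
      Matrix.cons_val_one, Matrix.head_cons, Matrix.cons_val_two, Matrix.tail_cons,
      kX0, kX1, kX2, kY0, kY1, kY2]
    norm_num
  · refine ⟨Amap, fun v => rfl, ?_⟩
    have hAX : (fun i => Amap (X i)) = Z := by
      funext i; ext j
      fin_cases i <;> fin_cases j <;> simp [hXdef, hZdef, Amap, toE] <;> norm_num
    rw [hAX]
    have hlog : Real.log (Real.sqrt 2 / Real.sqrt 5) =
        Real.log 2 / 2 - Real.log 5 / 2 := by
      rw [Real.log_div s2 s5, Real.log_sqrt (by norm_num), Real.log_sqrt (by norm_num)]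
    simp only [LNSAmetric, LNSAone, Fin.sum_univ_three, Matrix.cons_val_zero,
      Matrix.cons_val_one, Matrix.head_cons, Matrix.cons_val_two, Matrix.tail_cons,
      kZ0, kZ1, kZ2, kY0, kY1, kY2, hlog]
    push_cast
    ring
end
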